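/- Let α > 0 and z ∈ ℂ. Then ∫₀^∞ t·e^(−π·α²·t²)·cos(√π·α·t·z) dt = (e^(−z²/4)/(2π·α²))·₁F₁(−1/2; 1/2; z²/4). -/

import Mathlib

open scoped Real
open MeasureTheory

/-- Rising factorial (Pochhammer symbol) `(a)_n`. -/
noncomputable def poch (a : ℂ) (n : ℕ) : ℂ := (ascPochhammer ℂ n).eval a

/-- Confluent hypergeometric function `₁F₁(a;c;w)`. -/
noncomputable def oneF1 (a c w : ℂ) : ℂ :=
  ∑' n : ℕ, poch a n * w ^ n / (poch c n * n.factorial)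

/-- The hypergeometric function `₂F₂(1,1;3/2,2;w)`. -/
noncomputable def twoF2 (w : ℂ) : ℂ :=
  ∑' n : ℕ, poch 1 n * poch 1 n * w ^ n / (poch (3/2) n * poch 2 n * n.factorial)

/-- The Riemann xi function `ξ(s) = (1/2) s (s-1) π^(-s/2) Γ(s/2) ζ(s)`. -/
noncomputable def xiR (s : ℂ) : ℂ :=
  (1 / 2) * s * (s - 1) * (π : ℂ) ^ (-s / 2) * Complex.Gamma (s / 2) * riemannZeta s

/-- The Riemann Xi function `Ξ(t) = ξ(1/2 + i t)`. -/
noncomputable def XiR (t : ℂ) : ℂ := xiR (1 / 2 + Complex.I * t)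

/-- `ρ(x,z,s) = x^(1/2-s) e^(-z²/8) ₁F₁((1-s)/2; 1/2; z²/4)`. -/
noncomputable def rhoF (x : ℝ) (z s : ℂ) : ℂ :=
  (x : ℂ) ^ ((1 : ℂ) / 2 - s) * Complex.exp (-z ^ 2 / 8) *
    oneF1 ((1 - s) / 2) (1 / 2) (z ^ 2 / 4)

/-- `∇(x,z,s) = ρ(x,z,s) + ρ(x,z,1-s)`. -/
noncomputable def nablaF (x : ℝ) (z s : ℂ) : ℂ := rhoF x z s + rhoF x z (1 - s)

/-- The digamma function `ψ(x) = Γ'(x)/Γ(x)`. -/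
noncomputable def digamma (x : ℝ) : ℝ := deriv Real.Gamma x / Real.Gamma x

/-- The modified Bessel function of order zero, `K₀(x) = ∫₀^∞ e^(-x cosh u) du`. -/
noncomputable def besselK0 (x : ℝ) : ℝ := ∫ u in Set.Ioi (0 : ℝ), Real.exp (-x * Real.cosh u)

/-!
Expanding `cos (u t)` in its Taylor series and integrating termwise against the Gaussian moments
`∫₀^∞ t^(2n+1) e^(-b t²) dt = n! / (2 b^(n+1))` gives `₁F₁(1; 1/2; -u²/(4b)) / (2b)`, because
`(2n)! = 4ⁿ n! (1/2)ₙ`. Kummer's transformation `₁F₁(1; c; -w) = e^(-w) ₁F₁(c-1; c; w)` turns this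
into the stated form. It is proved coefficientwise on formal power series: `P = eˣ ₁F₁(1; c; -X)`
satisfies `X P' = (1 - c) P + (c - 1) eˣ`, which forces `(m + c - 1) pₘ = (c - 1) / m!`.
-/

open scoped Nat
open Set Filter PowerSeries

lemma poch_succ (a : ℂ) (n : ℕ) : poch a (n + 1) = poch a n * (a + n) :=
  ascPochhammer_succ_eval n a

lemma poch_one (n : ℕ) : poch 1 n = n ! :=
  ascPochhammer_eval_one ℂ n

lemma poch_sub_one_succ (c : ℂ) (n : ℕ) : poch (c - 1) (n + 1) = (c - 1) * poch c n := by
  simp [poch, ascPochhammer_succ_left]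

lemma poch_ne_zero {c : ℂ} (hc : ∀ k : ℕ, c + k ≠ 0) (n : ℕ) : poch c n ≠ 0 := by
  induction n with
  | zero => simp [poch]
  | succ n ih => rw [poch_succ]; exact mul_ne_zero ih (hc n)

lemma poch_half_mul_four_pow_mul_factorial (n : ℕ) :
    poch (1 / 2) n * (4 ^ n * n !) = (2 * n)! := by
  induction n with
  | zero => simp [poch]
  | succ n ih =>
    rw [show 2 * (n + 1) = 2 * n + 1 + 1 by ring, Nat.factorial_succ, Nat.factorial_succ,
      Nat.factorial_succ, poch_succ]
    push_cast at ih ⊢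
    linear_combination (4 * ((n : ℂ) + 1) * (1 / 2 + n)) * ih

lemma one_half_add_intCast_ne_zero (k : ℤ) : (1 / 2 : ℂ) + k ≠ 0 := by
  intro h
  have h2 : (2 * k + 1 : ℂ) = 0 := by linear_combination 2 * h
  norm_cast at h2
  omega

lemma summable_norm_pow_div_poch {c : ℂ} (hc : ∀ k : ℕ, c + k ≠ 0) (w : ℂ) :
    Summable fun n => ‖w ^ n / poch c n‖ := by
  refine summable_of_ratio_norm_eventually_le one_half_lt_one ?_
  filter_upwards [eventually_ge_atTop ⌈‖c‖ + 2 * ‖w‖⌉₊] with n hn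
  have hcn : ‖c‖ + 2 * ‖w‖ ≤ n := Nat.ceil_le.mp hn
  have hnorm : 2 * ‖w‖ ≤ ‖c + n‖ := by
    have := norm_sub_norm_le (n : ℂ) (-c)
    rw [Complex.norm_natCast, norm_neg, sub_neg_eq_add, add_comm] at this
    linarith
  have hpos : 0 < ‖c + n‖ := norm_pos_iff.mpr (hc n)
  rw [norm_norm, norm_norm, pow_succ, poch_succ, mul_div_mul_comm, norm_mul, norm_div w,
    mul_comm (1 / 2)]
  refine mul_le_mul_of_nonneg_left ?_ (norm_nonneg _)
  rw [div_le_iff₀ hpos]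
  linarith

lemma coeff_X_mul_derivative {R : Type*} [CommSemiring R] (f : R⟦X⟧) (n : ℕ) :
    coeff n (X * d⁄dX R f) = n * coeff n f := by
  cases n with
  | zero => simp
  | succ n => rw [coeff_succ_X_mul, coeff_derivative, mul_comm]; push_cast; rfl

noncomputable def oneF1Series (a c : ℂ) : ℂ⟦X⟧ :=
  mk fun n => poch a n / (poch c n * n !)

lemma coeff_rescale_neg_one_oneF1Series_one (c : ℂ) (n : ℕ) :
    coeff n (rescale (-1) (oneF1Series 1 c)) = (-1) ^ n / poch c n := by
  have : (n ! : ℂ) ≠ 0 := mod_cast n.factorial_ne_zero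
  rw [coeff_rescale, oneF1Series, coeff_mk, poch_one, mul_comm (poch c n), ← div_div,
    div_self this, one_div, div_eq_mul_inv]

lemma X_mul_derivative_rescale_oneF1Series_one {c : ℂ} (hc : ∀ k : ℕ, c + k ≠ 0) :
    X * d⁄dX ℂ (rescale (-1) (oneF1Series 1 c)) =
      C (1 - c) * rescale (-1) (oneF1Series 1 c) + C (c - 1) -
        X * rescale (-1) (oneF1Series 1 c) := by
  ext n
  rw [coeff_X_mul_derivative, map_sub, map_add, coeff_C_mul, coeff_C]
  cases n with
  | zero =>
    rw [coeff_rescale_neg_one_oneF1Series_one]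
    simp [poch]
  | succ n =>
    simp only [coeff_succ_X_mul, coeff_rescale_neg_one_oneF1Series_one, poch_succ,
      Nat.succ_ne_zero, if_false]
    field_simp [poch_ne_zero hc n, hc n]
    push_cast
    ring

lemma exp_mul_rescale_oneF1Series_one {c : ℂ} (hc : ∀ k : ℕ, c - 1 + k ≠ 0) :
    exp ℂ * rescale (-1) (oneF1Series 1 c) = oneF1Series (c - 1) c := by
  have hc' (k : ℕ) : c + k ≠ 0 := by simpa [add_assoc, add_comm] using hc (k + 1)
  set B := rescale (-1) (oneF1Series 1 c)
  have hODE : X * d⁄dX ℂ (exp ℂ * B) = C (1 - c) * (exp ℂ * B) + C (c - 1) * exp ℂ := by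
    rw [Derivation.leibniz, derivative_exp, smul_eq_mul, smul_eq_mul]
    linear_combination exp ℂ * X_mul_derivative_rescale_oneF1Series_one hc'
  ext m
  have hm := congrArg (coeff m) hODE
  rw [coeff_X_mul_derivative, map_add, coeff_C_mul, coeff_C_mul, coeff_exp] at hm
  have hfac : (m ! : ℂ) ≠ 0 := mod_cast m.factorial_ne_zero
  have hsucc := poch_succ (c - 1) m
  rw [poch_sub_one_succ] at hsucc
  rw [oneF1Series, coeff_mk, eq_div_iff (mul_ne_zero (poch_ne_zero hc' m) hfac)]
  simp only [eq_ratCast, one_div, Rat.cast_inv, Rat.cast_natCast] at hm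
  refine mul_left_cancel₀ (hc m) ?_
  linear_combination (poch c m * m !) * hm + hsucc + (c - 1) * poch c m * mul_inv_cancel₀ hfac

lemma tsum_coeff_mul_mul_pow {R : Type*} [NormedCommRing R] [CompleteSpace R]
    {f g : R⟦X⟧} {w : R} (hf : Summable fun n => ‖coeff n f * w ^ n‖)
    (hg : Summable fun n => ‖coeff n g * w ^ n‖) :
    (∑' n, coeff n f * w ^ n) * (∑' n, coeff n g * w ^ n) = ∑' n, coeff n (f * g) * w ^ n := by
  rw [tsum_mul_tsum_eq_tsum_sum_antidiagonal_of_summable_norm hf hg]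
  refine tsum_congr fun n => ?_
  rw [coeff_mul, Finset.sum_mul]
  refine Finset.sum_congr rfl fun kl hkl => ?_
  rw [← Finset.HasAntidiagonal.mem_antidiagonal.mp hkl, pow_add]
  ring

lemma summable_norm_coeff_exp_mul_pow (w : ℂ) : Summable fun n => ‖coeff n (exp ℂ) * w ^ n‖ := by
  refine (Real.summable_pow_div_factorial ‖w‖).congr fun n => ?_
  simp [coeff_exp, div_eq_inv_mul]

lemma tsum_coeff_exp_mul_pow (w : ℂ) : ∑' n, coeff n (exp ℂ) * w ^ n = Complex.exp w := by
  rw [Complex.exp_eq_exp_ℂ, NormedSpace.exp_eq_tsum_div]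
  refine tsum_congr fun n => ?_
  simp [coeff_exp, div_eq_inv_mul]

lemma oneF1_eq_tsum_coeff (a c w : ℂ) : oneF1 a c w = ∑' n, coeff n (oneF1Series a c) * w ^ n := by
  refine tsum_congr fun n => ?_
  rw [oneF1Series, coeff_mk]
  ring

lemma oneF1_one (c w : ℂ) : oneF1 1 c w = ∑' n, w ^ n / poch c n := by
  refine tsum_congr fun n => ?_
  have : (n ! : ℂ) ≠ 0 := mod_cast n.factorial_ne_zero
  rw [poch_one]
  field_simp

theorem oneF1_one_neg_eq_exp_neg_mul {c : ℂ} (hc : ∀ k : ℕ, c - 1 + k ≠ 0) (w : ℂ) :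
    oneF1 1 c (-w) = Complex.exp (-w) * oneF1 (c - 1) c w := by
  have hc' (k : ℕ) : c + k ≠ 0 := by simpa [add_assoc, add_comm] using hc (k + 1)
  have hB : oneF1 1 c (-w) = ∑' n, coeff n (rescale (-1) (oneF1Series 1 c)) * w ^ n := by
    rw [oneF1_eq_tsum_coeff]
    refine tsum_congr fun n => ?_
    rw [coeff_rescale, neg_pow]
    ring
  have hBsum : Summable fun n => ‖coeff n (rescale (-1) (oneF1Series 1 c)) * w ^ n‖ := by
    refine (summable_norm_pow_div_poch hc' (-w)).congr fun n => ?_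
    rw [coeff_rescale_neg_one_oneF1Series_one, neg_pow, div_mul_eq_mul_div, mul_comm]
  have hprod : Complex.exp w * oneF1 1 c (-w) = oneF1 (c - 1) c w := by
    rw [hB, ← tsum_coeff_exp_mul_pow, tsum_coeff_mul_mul_pow (summable_norm_coeff_exp_mul_pow w)
      hBsum, exp_mul_rescale_oneF1Series_one hc, oneF1_eq_tsum_coeff]
  rw [← hprod, ← mul_assoc, ← Complex.exp_add, neg_add_cancel, Complex.exp_zero, one_mul]

lemma integrableOn_pow_mul_exp_neg_mul_sq {b : ℝ} (hb : 0 < b) (k : ℕ) :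
    IntegrableOn (fun t : ℝ => t ^ k * Real.exp (-b * t ^ 2)) (Ioi 0) := by
  simpa only [Real.rpow_natCast] using
    integrableOn_rpow_mul_exp_neg_mul_sq hb (s := k) (by linarith [k.cast_nonneg (α := ℝ)])

lemma integral_Ioi_pow_mul_exp_neg_mul_sq {b : ℝ} (hb : 0 < b) (n : ℕ) :
    ∫ t in Ioi (0 : ℝ), t ^ (2 * n + 1) * Real.exp (-b * t ^ 2) = n ! / (2 * b ^ (n + 1)) := by
  have h := integral_rpow_mul_exp_neg_mul_rpow two_pos (q := (2 * n + 1 : ℕ))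
    (by linarith [(2 * n + 1).cast_nonneg (α := ℝ)]) hb
  have hexp : -((2 * n + 1 : ℕ) + 1 : ℝ) / 2 = -((n + 1 : ℕ) : ℝ) := by push_cast; ring
  have hGamma : ((2 * n + 1 : ℕ) + 1 : ℝ) / 2 = n + 1 := by push_cast; ring
  simp only [Real.rpow_natCast, Real.rpow_two, hexp, hGamma, Real.rpow_neg hb.le,
    Real.Gamma_nat_eq_factorial] at h
  rw [h]
  ring

lemma integral_norm_mul_ofReal {α : Type*} [MeasurableSpace α] {μ : Measure α} (c : ℂ)
    {g : α → ℝ} (hg : 0 ≤ᵐ[μ] g) : ∫ x, ‖c * g x‖ ∂μ = ‖∫ x, c * g x ∂μ‖ := by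
  calc ∫ x, ‖c * g x‖ ∂μ = ∫ x, ‖c‖ * g x ∂μ :=
        integral_congr_ae (hg.mono fun x hx => by simp [abs_of_nonneg hx])
    _ = ‖∫ x, c * g x ∂μ‖ := by
        rw [integral_const_mul, integral_const_mul, integral_complex_ofReal, norm_mul,
          Complex.norm_real, Real.norm_of_nonneg (integral_nonneg_of_ae hg)]

theorem integral_Ioi_mul_exp_neg_mul_sq_mul_cos {b : ℝ} (hb : 0 < b) (u : ℂ) :
    ∫ t in Ioi (0 : ℝ), (t : ℂ) * Complex.exp (-b * t ^ 2) * Complex.cos (u * t) =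
      oneF1 1 (1 / 2) (-(u ^ 2 / (4 * b))) / (2 * b) := by
  set term : ℕ → ℝ → ℂ := fun n t =>
    (-1) ^ n * u ^ (2 * n) / (2 * n)! * (t ^ (2 * n + 1) * Real.exp (-b * t ^ 2) : ℝ)
  have hexpand (t : ℝ) :
      (t : ℂ) * Complex.exp (-b * t ^ 2) * Complex.cos (u * t) = ∑' n, term n t := by
    rw [← ((Complex.hasSum_cos (u * t)).mul_left _).tsum_eq]
    refine tsum_congr fun n => ?_
    simp only [term, Complex.ofReal_mul, Complex.ofReal_pow, Complex.ofReal_exp, Complex.ofReal_neg]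
    ring
  have hint (n : ℕ) : Integrable (term n) (volume.restrict (Ioi 0)) :=
    (integrableOn_pow_mul_exp_neg_mul_sq hb _).ofReal.const_mul _
  have hval (n : ℕ) :
      ∫ t in Ioi (0 : ℝ), term n t = (-(u ^ 2 / (4 * b))) ^ n / poch (1 / 2) n / (2 * b) := by
    have hpoch := poch_half_mul_four_pow_mul_factorial n
    have hb' : (b : ℂ) ≠ 0 := mod_cast hb.ne'
    have hfac : (n ! : ℂ) ≠ 0 := mod_cast n.factorial_ne_zero
    rw [integral_const_mul, integral_complex_ofReal, integral_Ioi_pow_mul_exp_neg_mul_sq hb,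
      ← hpoch]
    have hpow : (-(u ^ 2 / (4 * b))) ^ n = (-1) ^ n * u ^ (2 * n) / (4 ^ n * b ^ n) := by
      rw [neg_pow, div_pow, mul_pow, ← pow_mul, mul_div_assoc]
    rw [hpow]
    push_cast
    field_simp
    ring
  have hnonneg (n : ℕ) : 0 ≤ᵐ[volume.restrict (Ioi 0)] fun t : ℝ =>
      t ^ (2 * n + 1) * Real.exp (-b * t ^ 2) :=
    (ae_restrict_mem measurableSet_Ioi).mono fun t (ht : 0 < t) => by positivity
  have hsum : Summable fun n => ∫ t in Ioi (0 : ℝ), ‖term n t‖ := by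
    refine ((summable_norm_pow_div_poch (fun k => mod_cast one_half_add_intCast_ne_zero k)
      (-(u ^ 2 / (4 * b)))).div_const ‖(2 * b : ℂ)‖).congr fun n => ?_
    rw [integral_norm_mul_ofReal _ (hnonneg n), hval]
    simp only [norm_div]
  rw [integral_congr_ae (ae_of_all _ hexpand),
    ← (hasSum_integral_of_summable_integral_norm hint hsum).tsum_eq, tsum_congr hval,
    tsum_div_const, oneF1_one]

theorem stmt18 (α : ℝ) (hα : 0 < α) (z : ℂ) :
    (∫ t in Set.Ioi (0 : ℝ),
        (t : ℂ) * Complex.exp (-(π : ℂ) * α ^ 2 * t ^ 2) *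
          Complex.cos ((Real.sqrt π : ℂ) * α * t * z)) =
    Complex.exp (-z ^ 2 / 4) / (2 * π * α ^ 2) * oneF1 (-(1 / 2)) (1 / 2) (z ^ 2 / 4) := by
  have hb : 0 < π * α ^ 2 := by positivity
  have hπ : (π : ℂ) ≠ 0 := mod_cast Real.pi_ne_zero
  have hα' : (α : ℂ) ≠ 0 := mod_cast hα.ne'
  have hsqrt : (Real.sqrt π : ℂ) ^ 2 = π := mod_cast Real.sq_sqrt Real.pi_pos.le
  have hu : ((Real.sqrt π : ℂ) * α * z) ^ 2 / (4 * (π * α ^ 2 : ℝ)) = z ^ 2 / 4 := by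
    push_cast
    rw [mul_pow, mul_pow, hsqrt]
    field_simp
  have hkummer := oneF1_one_neg_eq_exp_neg_mul (c := 1 / 2)
    (fun k => by convert one_half_add_intCast_ne_zero (k - 1) using 1; push_cast; ring) (z ^ 2 / 4)
  calc _ = ∫ t in Ioi (0 : ℝ), (t : ℂ) * Complex.exp (-(π * α ^ 2 : ℝ) * t ^ 2) *
        Complex.cos ((Real.sqrt π : ℂ) * α * z * t) := by
        congr 1
        funext t
        push_cast
        ring_nf
    _ = _ := by
        rw [integral_Ioi_mul_exp_neg_mul_sq_mul_cos hb, hu, hkummer,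
          show (1 / 2 : ℂ) - 1 = -(1 / 2) by norm_num, neg_div]
        push_cast
        ring
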